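/- Let b ≥ 1 and k ≥ 0 be integers, α a real number, and a_1,…,a_b natural numbers. Then ∑ over all tuples (j_1,…,j_b) of natural numbers with j_1+⋯+j_b = k of ∏_{m=1}^{b} C(a_m + j_m + α − 1, j_m) equals C(a_1+⋯+a_b + bα + k − 1, k). In particular, if a_1+⋯+a_b = b−1 (as holds for the out-degrees of the b nodes of a tree of size b) the sum equals C(b + bα + k − 2, k), which yields the degree-weight φ_k = T_b·C(b+bα+k−2, k) of the weight-preserving bucketing of generalized plane-oriented recursive trees with degree weights φ_k = C(k+α−1, k). -/

import Mathlib

/-- The generalized binomial coefficient `C(x, n) = x(x-1)⋯(x-n+1)/n!`. -/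
noncomputable def genBinom (x : ℝ) (n : ℕ) : ℝ :=
    (∏ i ∈ Finset.range n, (x - i)) / (n.factorial : ℝ)

/-!
Each factor `C(y + j - 1, j)` is the multiset coefficient `multichoose y j = (-1)^j C(-y, j)`,
so Vandermonde's convolution for the upper arguments `-y` gives
`multichoose (r + s) k = ∑_{i + j = k} multichoose r i * multichoose s j`. Iterating it over the
`b` factors with `y_m = a_m + α` yields `multichoose (∑ a_m + bα) k = C(∑ a_m + bα + k - 1, k)`.
-/

open Finset Polynomial

lemma genBinom_eq_choose (x : ℝ) (n : ℕ) : genBinom x n = Ring.choose x n := by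
  have h := Ring.descPochhammer_eq_factorial_smul_choose x n
  rw [← aeval_eq_smeval, aeval_def, eval₂_eq_eval_map, descPochhammer_map,
    descPochhammer_eval_eq_prod_range, nsmul_eq_mul] at h
  rw [genBinom, h]
  field_simp

lemma genBinom_add_sub_one_eq_multichoose (y : ℝ) (n : ℕ) :
    genBinom (y + n - 1) n = Ring.multichoose y n := by
  rw [Ring.multichoose_eq, genBinom_eq_choose]

namespace Ring

variable {R : Type*} [CommRing R] [BinomialRing R]

theorem multichoose_add (r s : R) (k : ℕ) :
    multichoose (r + s) k = ∑ p ∈ antidiagonal k, multichoose r p.1 * multichoose s p.2 := by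
  have h := add_choose_eq k (Commute.all (-r) (-s))
  rw [← neg_add, choose_neg'] at h
  rw [← smul_left_cancel_iff (Int.negOnePow k), h, smul_sum]
  refine sum_congr rfl fun p hp => ?_
  rw [choose_neg', choose_neg', smul_mul_smul_comm, ← Int.negOnePow_add, ← Nat.cast_add,
    mem_antidiagonal.1 hp]

theorem multichoose_sum {ι : Type*} [DecidableEq ι] (s : Finset ι) (r : ι → R) (k : ℕ) :
    multichoose (∑ i ∈ s, r i) k = ∑ j ∈ piAntidiag s k, ∏ i ∈ s, multichoose (r i) (j i) := by
  induction s using Finset.cons_induction generalizing k with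
  | empty => cases k <;> simp [multichoose_zero_succ]
  | cons a s has ih =>
    rw [sum_cons, multichoose_add, piAntidiag_cons, sum_disjiUnion]
    refine sum_congr rfl fun p _ => ?_
    rw [ih, mul_sum, sum_map]
    refine sum_congr rfl fun j hj => ?_
    have hja : j a = 0 := by_contra fun h => has ((mem_piAntidiag.1 hj).2 a h)
    have hjs : ∀ i ∈ s, j i + (if i = a then p.1 else 0) = j i := fun i hi => by
      rw [if_neg (ne_of_mem_of_not_mem hi has), add_zero]
    simp only [prod_cons, addRightEmbedding_apply, Pi.add_apply, if_pos, hja, zero_add]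
    rw [prod_congr rfl fun i hi => congrArg _ (hjs i hi)]

end Ring

/-- For integers `b ≥ 1`, `k ≥ 0`, a real `α` and natural numbers `a_1, …, a_b`, the sum over all
tuples `(j_1, …, j_b)` of natural numbers with `j_1 + ⋯ + j_b = k` of
`∏_{m=1}^{b} C(a_m + j_m + α - 1, j_m)` equals `C(a_1+⋯+a_b + bα + k - 1, k)`.  In particular,
if `a_1 + ⋯ + a_b = b - 1` the sum equals `C(b + bα + k - 2, k)`, yielding the degree weights of
the weight-preserving bucketing of generalized plane-oriented recursive trees. -/
theorem vandermonde_convolution_bundles (b : ℕ) (hb : 1 ≤ b) (k : ℕ) (α : ℝ)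
    (a : Fin b → ℕ) :
    (∑ j ∈ Finset.Nat.antidiagonalTuple b k,
        ∏ m : Fin b, genBinom ((a m : ℝ) + (j m : ℝ) + α - 1) (j m)
      = genBinom (((∑ m : Fin b, a m : ℕ) : ℝ) + (b : ℝ) * α + (k : ℝ) - 1) k) ∧
    ((∑ m : Fin b, a m) = b - 1 →
      ∑ j ∈ Finset.Nat.antidiagonalTuple b k,
          ∏ m : Fin b, genBinom ((a m : ℝ) + (j m : ℝ) + α - 1) (j m)
        = genBinom ((b : ℝ) + (b : ℝ) * α + (k : ℝ) - 2) k) := by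
  have hsum : ∑ j ∈ Nat.antidiagonalTuple b k,
        ∏ m : Fin b, genBinom ((a m : ℝ) + (j m : ℝ) + α - 1) (j m)
      = genBinom (((∑ m : Fin b, a m : ℕ) : ℝ) + (b : ℝ) * α + (k : ℝ) - 1) k := by
    have hy : ∑ m : Fin b, ((a m : ℝ) + α) = ((∑ m : Fin b, a m : ℕ) : ℝ) + b * α := by
      simp [sum_add_distrib]
    rw [← hy, genBinom_add_sub_one_eq_multichoose, Ring.multichoose_sum,
      piAntidiag_univ_fin_eq_antidiagonalTuple]
    refine sum_congr rfl fun j _ => prod_congr rfl fun m _ => ?_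
    rw [← genBinom_add_sub_one_eq_multichoose, add_right_comm]
  refine ⟨hsum, fun ha => ?_⟩
  rw [hsum, ha, Nat.cast_sub hb]
  congr 1
  push_cast
  ring
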